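/- arXiv:1111.7038 — 3 statements merged into one kernel-verified Lean document; each statement's English description precedes it below -/
import Mathlib

section
/- For an even probability measure μ with infinite support on [-L,L] and x_n := μ_{2n}/μ_{2n-2}, the inequality x_{n+3}(x_{n+4} - x_{n+2}) + x_{n+1}(x_{n+2} - x_{n+1}) > x_{n+2}(x_{n+3} - x_{n+2}) + 2 x_{n+1}(x_{n+3} - x_{n+2}) holds for all n ≥ 0. -/
/-!
Put `a = x (n+1)` and `b = x (n+2)`. Expanding `t^(2n) (t² - a)² (t² - b)²` and integrating term by
term expresses `∫ t^(2n) (t² - a)² (t² - b)² dμ` as a combination of the moments `M n, …, M (n+4)`;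
divided by `M (n+2)`, that combination is exactly the difference of the two sides of the inequality.
The integral is positive because its integrand is nonnegative and vanishes only at finitely many
points, which form a null set for a measure of infinite support.
-/

open MeasureTheory Polynomial

theorem integral_pos_of_finite_setOf_eq_zero {α : Type*} [MeasurableSpace α] {μ : Measure α}
    (hμ : ∀ s : Finset α, μ (s : Set α)ᶜ ≠ 0) {f : α → ℝ} (hf : 0 ≤ f) (hfi : Integrable f μ)
    (hzero : {t | f t = 0}.Finite) : 0 < ∫ t, f t ∂μ := by
  rw [integral_pos_iff_support_of_nonneg hf hfi]
  have hsupp : (hzero.toFinset : Set α)ᶜ ⊆ Function.support f := by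
    intro t ht
    simpa using ht
  exact (pos_iff_ne_zero.mpr (hμ hzero.toFinset)).trans_le (measure_mono hsupp)

theorem finite_setOf_even_pow_mul_quartic_eq_zero (n : ℕ) (a b : ℝ) :
    {t : ℝ | t ^ (2 * n) * ((t ^ 2 - a) * (t ^ 2 - b)) ^ 2 = 0}.Finite := by
  have hmonic : (X ^ (2 * n) * ((X ^ 2 - C a) * (X ^ 2 - C b)) ^ 2 : ℝ[X]).Monic :=
    (monic_X_pow _).mul (((monic_X_pow_sub_C a two_ne_zero).mul
      (monic_X_pow_sub_C b two_ne_zero)).pow 2)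
  convert finite_setOfPred_isRoot hmonic.ne_zero using 2
  simp

theorem even_pow_mul_quartic_eq_sum (n : ℕ) (a b t : ℝ) :
    t ^ (2 * n) * ((t ^ 2 - a) * (t ^ 2 - b)) ^ 2 = ∑ k : Fin 5,
      ![a ^ 2 * b ^ 2, -(2 * a * b * (a + b)), a ^ 2 + 4 * a * b + b ^ 2, -(2 * (a + b)), 1] k
        * t ^ (2 * (n + k)) := by
  simp only [Fin.sum_univ_five, Matrix.cons_val, Fin.coe_ofNat_eq_mod]
  ring

theorem integrable_even_pow_mul_quartic {μ : Measure ℝ}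
    (hint : ∀ n : ℕ, Integrable (fun t : ℝ => t ^ (2 * n)) μ) (n : ℕ) (a b : ℝ) :
    Integrable (fun t : ℝ => t ^ (2 * n) * ((t ^ 2 - a) * (t ^ 2 - b)) ^ 2) μ := by
  simp_rw [even_pow_mul_quartic_eq_sum]
  exact integrable_finsetSum _ fun k _ => (hint _).const_mul _

theorem integral_even_pow_mul_quartic {μ : Measure ℝ}
    (hint : ∀ n : ℕ, Integrable (fun t : ℝ => t ^ (2 * n)) μ) {M : ℕ → ℝ}
    (hM : ∀ n : ℕ, M n = ∫ t : ℝ, t ^ (2 * n) ∂μ) (n : ℕ) (a b : ℝ) :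
    ∫ t : ℝ, t ^ (2 * n) * ((t ^ 2 - a) * (t ^ 2 - b)) ^ 2 ∂μ
      = M (n + 4) - 2 * (a + b) * M (n + 3) + (a ^ 2 + 4 * a * b + b ^ 2) * M (n + 2)
        - 2 * a * b * (a + b) * M (n + 1) + a ^ 2 * b ^ 2 * M n := by
  simp_rw [even_pow_mul_quartic_eq_sum]
  rw [integral_finsetSum _ fun k _ => (hint _).const_mul _]
  simp only [integral_const_mul, ← hM, Fin.sum_univ_five, Matrix.cons_val, Fin.coe_ofNat_eq_mod,
    Nat.reduceMod, add_zero]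
  ring

theorem ratio_inequality_of_quartic_form_pos {m₀ m₁ m₂ m₃ m₄ a b : ℝ}
    (h₀ : m₀ ≠ 0) (h₁ : m₁ ≠ 0) (h₂ : 0 < m₂) (h₃ : m₃ ≠ 0) (ha : a = m₁ / m₀) (hb : b = m₂ / m₁)
    (hQ : 0 < m₄ - 2 * (a + b) * m₃ + (a ^ 2 + 4 * a * b + b ^ 2) * m₂
      - 2 * a * b * (a + b) * m₁ + a ^ 2 * b ^ 2 * m₀) :
    m₃ / m₂ * (m₄ / m₃ - m₂ / m₁) + m₁ / m₀ * (m₂ / m₁ - m₁ / m₀)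
      > m₂ / m₁ * (m₃ / m₂ - m₂ / m₁) + 2 * (m₁ / m₀) * (m₃ / m₂ - m₂ / m₁) := by
  rw [gt_iff_lt, ← sub_pos]
  refine (div_pos hQ h₂).trans_eq ?_
  subst ha hb
  field_simp
  ring

theorem moment_ratio_nonlinear_inequality_general
    (μ : Measure ℝ)
    (hinf : ∀ s : Finset ℝ, μ ((s : Set ℝ))ᶜ ≠ 0)
    (hint : ∀ n : ℕ, Integrable (fun t : ℝ => t ^ (2 * n)) μ)
    (M : ℕ → ℝ) (hM : ∀ n : ℕ, M n = ∫ t : ℝ, t ^ (2 * n) ∂μ)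
    (x : ℕ → ℝ) (hx : ∀ n : ℕ, 1 ≤ n → x n = M n / M (n - 1)) :
    ∀ n : ℕ, x (n+3) * (x (n+4) - x (n+2)) + x (n+1) * (x (n+2) - x (n+1))
      > x (n+2) * (x (n+3) - x (n+2)) + 2 * x (n+1) * (x (n+3) - x (n+2)) := by
  have hMpos (k : ℕ) : 0 < M k := by
    rw [hM]
    refine integral_pos_of_finite_setOf_eq_zero hinf (fun t => ?_) (hint k) ?_
    · exact (even_two_mul k).pow_nonneg t
    · exact (Set.finite_singleton 0).subset fun t ht => eq_zero_of_pow_eq_zero ht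
  intro n
  have hQ := integral_pos_of_finite_setOf_eq_zero hinf
    (fun t => mul_nonneg ((even_two_mul n).pow_nonneg t) (sq_nonneg _))
    (integrable_even_pow_mul_quartic hint n (M (n + 1) / M n) (M (n + 2) / M (n + 1)))
    (finite_setOf_even_pow_mul_quartic_eq_zero n _ _)
  rw [integral_even_pow_mul_quartic hint hM] at hQ
  simp only [hx _ (Nat.le_add_left 1 _), Nat.add_sub_cancel]
  exact ratio_inequality_of_quartic_form_pos (hMpos n).ne' (hMpos (n + 1)).ne' (hMpos (n + 2))
    (hMpos (n + 3)).ne' rfl rfl hQ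

/-- The nonlinear inequality
x_{n+3}(x_{n+4}-x_{n+2}) + x_{n+1}(x_{n+2}-x_{n+1})
  > x_{n+2}(x_{n+3}-x_{n+2}) + 2x_{n+1}(x_{n+3}-x_{n+2})
for the moment ratios of an even probability measure with infinite support. -/
theorem moment_ratio_nonlinear_inequality
    (μ : Measure ℝ) [IsProbabilityMeasure μ]
    (heven : Measure.map (fun t : ℝ => -t) μ = μ)
    (hinf : ∀ s : Finset ℝ, μ ((s : Set ℝ))ᶜ ≠ 0)
    (hint : ∀ n : ℕ, Integrable (fun t : ℝ => t ^ (2 * n)) μ)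
    (M : ℕ → ℝ) (hM : ∀ n : ℕ, M n = ∫ t : ℝ, t ^ (2 * n) ∂μ)
    (x : ℕ → ℝ) (hx : ∀ n : ℕ, 1 ≤ n → x n = M n / M (n - 1)) :
    ∀ n : ℕ, x (n+3) * (x (n+4) - x (n+2)) + x (n+1) * (x (n+2) - x (n+1))
      > x (n+2) * (x (n+3) - x (n+2)) + 2 * x (n+1) * (x (n+3) - x (n+2)) :=
  moment_ratio_nonlinear_inequality_general μ hinf hint M hM x hx
end

section
/- For the weight w(t) = C e^{-t²} K_ν(t²) |t|^{2μ-1} on ℝ with μ ± ν > 0 and suitable normalization constant C = Γ(μ+1/2) 2^μ / (√π Γ(μ+ν) Γ(μ-ν)), the even moments are μ_{2n} = (μ+ν)_n (μ-ν)_n / (2^n (μ+1/2)_n), hence x_n = (μ+ν+n-1)(μ-ν+n-1) / (2(μ+n-1/2)). -/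
open MeasureTheory Real

/-- The modified Bessel function of the second kind, via its standard integral
representation K_ν(x) = ∫₀^∞ e^{-x cosh t} cosh(νt) dt (x > 0). -/
noncomputable def besselK (ν x : ℝ) : ℝ :=
  ∫ t in Set.Ioi (0:ℝ), Real.exp (-x * Real.cosh t) * Real.cosh (ν * t)

/-!
The substitution `u = t²` turns the `n`-th even moment into `C ∫₀^∞ u^{s-1} e^{-u} K_ν(u) du`
with `s = μ + n`. Inserting the integral defining `K_ν` and integrating in `u` first gives
`Γ(s) ∫₀^∞ cosh(νt) (1 + cosh t)^{-s} dt`, half of the same integral over `ℝ`. Writing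
`x = sigmoid t`, so that `eᵗ = x / (1 - x)` and `1 + cosh t = 1 / (2x(1 - x))`, turns
`∫ e^{νt} (1 + cosh t)^{-s} dt` into the Beta integral `2^s B(s + ν, s - ν)`, and Legendre's
duplication formula turns `Γ(s) 2^{s-1} B(s + ν, s - ν)` into
`√π Γ(s + ν) Γ(s - ν) / (Γ(s + 1/2) 2^s)`. Finally `Γ(x + n) = Γ(x) (x)ₙ`.
-/

open Set ProbabilityTheory

lemma ProbabilityTheory.beta_comm (a b : ℝ) : beta a b = beta b a := by
  rw [beta, beta, mul_comm, add_comm]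

section Beta

variable {a b : ℝ}

lemma ofReal_rpow_mul_one_sub_rpow {x : ℝ} (hx : x ∈ Icc (0:ℝ) 1) :
    ((x ^ (a - 1) * (1 - x) ^ (b - 1) : ℝ) : ℂ)
      = (x : ℂ) ^ ((a : ℂ) - 1) * (1 - (x : ℂ)) ^ ((b : ℂ) - 1) := by
  rw [Complex.ofReal_mul, Complex.ofReal_cpow hx.1, Complex.ofReal_cpow (sub_nonneg.2 hx.2)]
  push_cast
  rfl

lemma integrableOn_cpow_mul_one_sub_cpow (ha : 0 < a) (hb : 0 < b) :
    IntegrableOn (fun x : ℝ => (x : ℂ) ^ ((a : ℂ) - 1) * (1 - (x : ℂ)) ^ ((b : ℂ) - 1))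
      (Ioc 0 1) :=
  (intervalIntegrable_iff_integrableOn_Ioc_of_le zero_le_one).1 <|
    Complex.betaIntegral_convergent (by simpa using ha) (by simpa using hb)

lemma integrableOn_rpow_mul_one_sub_rpow (ha : 0 < a) (hb : 0 < b) :
    IntegrableOn (fun x : ℝ => x ^ (a - 1) * (1 - x) ^ (b - 1)) (Ioc 0 1) := by
  refine IntegrableOn.congr_fun (integrableOn_cpow_mul_one_sub_cpow ha hb).re
    (fun x hx => ?_) measurableSet_Ioc
  rw [← ofReal_rpow_mul_one_sub_rpow (Ioc_subset_Icc_self hx), RCLike.re_to_complex,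
    Complex.ofReal_re]

lemma integral_rpow_mul_one_sub_rpow (ha : 0 < a) (hb : 0 < b) :
    ∫ x in Ioc 0 1, x ^ (a - 1) * (1 - x) ^ (b - 1) = beta a b := by
  rw [beta_eq_betaIntegralReal a b ha hb, Complex.betaIntegral,
    intervalIntegral.integral_of_le zero_le_one, ← RCLike.re_to_complex,
    ← integral_re (integrableOn_cpow_mul_one_sub_cpow ha hb)]
  refine setIntegral_congr_fun measurableSet_Ioc fun x hx => ?_
  rw [← ofReal_rpow_mul_one_sub_rpow (Ioc_subset_Icc_self hx), RCLike.re_to_complex,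
    Complex.ofReal_re]

lemma one_sub_sigmoid_pos (t : ℝ) : 0 < 1 - sigmoid t := sub_pos.2 (sigmoid_lt_one t)

lemma abs_deriv_sigmoid_smul_rpow_mul_one_sub_rpow (t : ℝ) :
    |sigmoid t * (1 - sigmoid t)| • (sigmoid t ^ (a - 1) * (1 - sigmoid t) ^ (b - 1))
      = sigmoid t ^ a * (1 - sigmoid t) ^ b := by
  have hσ := sigmoid_pos t
  have hσ' := one_sub_sigmoid_pos t
  rw [smul_eq_mul, abs_of_pos (by positivity), rpow_sub_one hσ.ne', rpow_sub_one hσ'.ne']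
  field_simp

lemma integrable_sigmoid_rpow_mul_one_sub_rpow (ha : 0 < a) (hb : 0 < b) :
    Integrable fun t => sigmoid t ^ a * (1 - sigmoid t) ^ b := by
  have h := integrableOn_image_iff_integrableOn_abs_deriv_smul MeasurableSet.univ
    (fun t _ => (hasDerivAt_sigmoid t).hasDerivWithinAt) sigmoid_injective.injOn
    fun x : ℝ => x ^ (a - 1) * (1 - x) ^ (b - 1)
  rw [image_univ, range_sigmoid, integrableOn_univ] at h
  simpa only [abs_deriv_sigmoid_smul_rpow_mul_one_sub_rpow] using
    h.1 ((integrableOn_rpow_mul_one_sub_rpow ha hb).mono_set Ioo_subset_Ioc_self)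

lemma integral_sigmoid_rpow_mul_one_sub_rpow (ha : 0 < a) (hb : 0 < b) :
    ∫ t, sigmoid t ^ a * (1 - sigmoid t) ^ b = beta a b := by
  have h := integral_image_eq_integral_abs_deriv_smul MeasurableSet.univ
    (fun t _ => (hasDerivAt_sigmoid t).hasDerivWithinAt) sigmoid_injective.injOn
    fun x : ℝ => x ^ (a - 1) * (1 - x) ^ (b - 1)
  rw [image_univ, range_sigmoid, Measure.restrict_univ, ← integral_Ioc_eq_integral_Ioo,
    integral_rpow_mul_one_sub_rpow ha hb] at h
  simpa only [abs_deriv_sigmoid_smul_rpow_mul_one_sub_rpow] using h.symm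

end Beta

lemma exp_mul_mul_one_add_cosh_rpow_neg (ν s t : ℝ) :
    exp (ν * t) * (1 + cosh t) ^ (-s)
      = 2 ^ s * (sigmoid t ^ (s + ν) * (1 - sigmoid t) ^ (s - ν)) := by
  have hσ := sigmoid_pos t
  have hσ' := one_sub_sigmoid_pos t
  have hexp : exp t = sigmoid t / (1 - sigmoid t) := by
    rw [eq_div_iff hσ'.ne', ← sigmoid_neg, ← sigmoid_mul_rexp_neg, mul_left_comm, ← exp_add]
    simp
  have hcosh : 1 + cosh t = (2 * (sigmoid t * (1 - sigmoid t)))⁻¹ := by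
    rw [cosh_eq, exp_neg, hexp]
    field_simp
    ring
  rw [hcosh, rpow_neg (by positivity), inv_rpow (by positivity), inv_inv, mul_comm ν t, exp_mul,
    hexp, div_rpow hσ.le hσ'.le, mul_rpow zero_le_two (by positivity), mul_rpow hσ.le hσ'.le,
    rpow_add hσ, rpow_sub hσ']
  field_simp

lemma cosh_mul_mul_one_add_cosh_rpow_neg (ν s t : ℝ) :
    cosh (ν * t) * (1 + cosh t) ^ (-s)
      = (exp (ν * t) * (1 + cosh t) ^ (-s) + exp (-ν * t) * (1 + cosh t) ^ (-s)) / 2 := by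
  rw [cosh_eq, neg_mul]
  ring

section CoshIntegral

variable {ν s : ℝ}

lemma integrable_exp_mul_mul_one_add_cosh_rpow_neg (h₁ : 0 < s + ν) (h₂ : 0 < s - ν) :
    Integrable fun t => exp (ν * t) * (1 + cosh t) ^ (-s) := by
  simpa only [exp_mul_mul_one_add_cosh_rpow_neg] using
    (integrable_sigmoid_rpow_mul_one_sub_rpow h₁ h₂).const_mul (2 ^ s)

lemma integral_exp_mul_mul_one_add_cosh_rpow_neg (h₁ : 0 < s + ν) (h₂ : 0 < s - ν) :
    ∫ t, exp (ν * t) * (1 + cosh t) ^ (-s) = 2 ^ s * beta (s + ν) (s - ν) := by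
  simp only [exp_mul_mul_one_add_cosh_rpow_neg, integral_const_mul,
    integral_sigmoid_rpow_mul_one_sub_rpow h₁ h₂]

lemma integrable_cosh_mul_mul_one_add_cosh_rpow_neg (h₁ : 0 < s + ν) (h₂ : 0 < s - ν) :
    Integrable fun t => cosh (ν * t) * (1 + cosh t) ^ (-s) := by
  have h₁' : 0 < s + -ν := by linarith
  have h₂' : 0 < s - -ν := by linarith
  refine (((integrable_exp_mul_mul_one_add_cosh_rpow_neg h₁ h₂).add
    (integrable_exp_mul_mul_one_add_cosh_rpow_neg h₁' h₂')).div_const 2).congr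
    (ae_of_all _ fun t => ?_)
  exact (cosh_mul_mul_one_add_cosh_rpow_neg ν s t).symm

lemma integral_cosh_mul_mul_one_add_cosh_rpow_neg (h₁ : 0 < s + ν) (h₂ : 0 < s - ν) :
    ∫ t, cosh (ν * t) * (1 + cosh t) ^ (-s) = 2 ^ s * beta (s + ν) (s - ν) := by
  have h₁' : 0 < s + -ν := by linarith
  have h₂' : 0 < s - -ν := by linarith
  simp only [cosh_mul_mul_one_add_cosh_rpow_neg]
  rw [integral_div, integral_add (integrable_exp_mul_mul_one_add_cosh_rpow_neg h₁ h₂)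
      (integrable_exp_mul_mul_one_add_cosh_rpow_neg h₁' h₂'),
    integral_exp_mul_mul_one_add_cosh_rpow_neg h₁ h₂,
    integral_exp_mul_mul_one_add_cosh_rpow_neg h₁' h₂',
    sub_neg_eq_add, ← sub_eq_add_neg, beta_comm (s - ν)]
  ring

lemma integral_cosh_mul_mul_one_add_cosh_rpow_neg_Ioi (h₁ : 0 < s + ν) (h₂ : 0 < s - ν) :
    ∫ t in Ioi 0, cosh (ν * t) * (1 + cosh t) ^ (-s) = 2 ^ (s - 1) * beta (s + ν) (s - ν) := by
  have hcosh (t : ℝ) : cosh (ν * |t|) = cosh (ν * t) := by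
    rcases abs_choice t with h | h <;> simp [h]
  have h := integral_comp_abs (f := fun t => cosh (ν * t) * (1 + cosh t) ^ (-s))
  simp only [hcosh, cosh_abs, integral_cosh_mul_mul_one_add_cosh_rpow_neg h₁ h₂] at h
  rw [rpow_sub_one two_ne_zero]
  linarith

end CoshIntegral

lemma rpow_mul_exp_neg_mul_exp_neg_mul_cosh (ν s u t : ℝ) :
    u ^ (s - 1) * exp (-u) * (exp (-u * cosh t) * cosh (ν * t))
      = u ^ (s - 1) * exp (-((1 + cosh t) * u)) * cosh (ν * t) := by
  rw [← mul_assoc, mul_assoc (u ^ (s - 1)), ← exp_add]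
  ring_nf

section Mellin

variable {ν s : ℝ}

lemma integrableOn_rpow_mul_exp_neg_mul_exp_neg_mul_cosh (hs : 0 < s) (t : ℝ) :
    IntegrableOn (fun u => u ^ (s - 1) * exp (-u) * (exp (-u * cosh t) * cosh (ν * t)))
      (Ioi 0) := by
  simp only [rpow_mul_exp_neg_mul_exp_neg_mul_cosh]
  have h := integrableOn_rpow_mul_exp_neg_mul_rpow (s := s - 1) (p := 1) (by linarith)
    one_pos (by positivity : 0 < 1 + cosh t)
  simp only [rpow_one, neg_mul] at h
  exact h.mul_const _

lemma integral_rpow_mul_exp_neg_mul_exp_neg_mul_cosh (hs : 0 < s) (t : ℝ) :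
    ∫ u in Ioi 0, u ^ (s - 1) * exp (-u) * (exp (-u * cosh t) * cosh (ν * t))
      = Gamma s * (cosh (ν * t) * (1 + cosh t) ^ (-s)) := by
  have hr : 0 < 1 + cosh t := by positivity
  rw [setIntegral_congr_fun measurableSet_Ioi fun u _ =>
      rpow_mul_exp_neg_mul_exp_neg_mul_cosh ν s u t, integral_mul_const,
    integral_rpow_mul_exp_neg_mul_Ioi hs hr, one_div, inv_rpow hr.le, ← rpow_neg hr.le]
  ring

-- Tonelli: the integrand is nonnegative, so the iterated integral in `t` controls its norm.
lemma integral_rpow_mul_exp_neg_mul_besselK_eq_Gamma_mul (hs : 0 < s)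
    (hJ : IntegrableOn (fun t => cosh (ν * t) * (1 + cosh t) ^ (-s)) (Ioi 0)) :
    ∫ u in Ioi 0, u ^ (s - 1) * exp (-u) * besselK ν u
      = Gamma s * ∫ t in Ioi 0, cosh (ν * t) * (1 + cosh t) ^ (-s) := by
  set F : ℝ → ℝ → ℝ := fun u t =>
    u ^ (s - 1) * exp (-u) * (exp (-u * cosh t) * cosh (ν * t))
  have hF : Integrable (Function.uncurry F)
      ((volume.restrict (Ioi 0)).prod (volume.restrict (Ioi 0))) := by
    refine (integrable_prod_iff' (by fun_prop)).2
      ⟨ae_of_all _ (integrableOn_rpow_mul_exp_neg_mul_exp_neg_mul_cosh hs), ?_⟩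
    refine IntegrableOn.congr_fun (hJ.const_mul (Gamma s)) (fun t _ => ?_) measurableSet_Ioi
    rw [← integral_rpow_mul_exp_neg_mul_exp_neg_mul_cosh hs]
    refine setIntegral_congr_fun measurableSet_Ioi fun u (hu : 0 < u) => ?_
    dsimp only [F, Function.uncurry_apply_pair]
    rw [Real.norm_of_nonneg (by positivity)]
  calc ∫ u in Ioi 0, u ^ (s - 1) * exp (-u) * besselK ν u
      = ∫ u in Ioi 0, ∫ t in Ioi 0, F u t := by
        simp only [F, besselK, integral_const_mul]
    _ = ∫ t in Ioi 0, ∫ u in Ioi 0, F u t := integral_integral_swap hF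
    _ = Gamma s * ∫ t in Ioi 0, cosh (ν * t) * (1 + cosh t) ^ (-s) := by
        simp only [F, integral_rpow_mul_exp_neg_mul_exp_neg_mul_cosh hs, integral_const_mul]

end Mellin

lemma Gamma_mul_two_rpow_mul_beta {ν s : ℝ} (h₁ : 0 < s + ν) (h₂ : 0 < s - ν) :
    Gamma s * (2 ^ (s - 1) * beta (s + ν) (s - ν))
      = √π * Gamma (s + ν) * Gamma (s - ν) / (Gamma (s + 1 / 2) * 2 ^ s) := by
  have hΓ : 0 < Gamma (s + 1 / 2) := Gamma_pos_of_pos (by linarith)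
  have hΓ₂ : 0 < Gamma (2 * s) := Gamma_pos_of_pos (by linarith)
  have hpow : (2 : ℝ) ^ (1 - 2 * s) * 2 ^ (s - 1) * 2 ^ s = 1 := by
    rw [← rpow_add two_pos, ← rpow_add two_pos, show 1 - 2 * s + (s - 1) + s = 0 by ring,
      rpow_zero]
  rw [beta, show s + ν + (s - ν) = 2 * s by ring, eq_div_iff (by positivity)]
  calc Gamma s * (2 ^ (s - 1) * (Gamma (s + ν) * Gamma (s - ν) / Gamma (2 * s)))
        * (Gamma (s + 1 / 2) * 2 ^ s)
      = Gamma s * Gamma (s + 1 / 2) * 2 ^ (s - 1) * 2 ^ s * Gamma (s + ν) * Gamma (s - ν)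
          / Gamma (2 * s) := by ring
    _ = √π * Gamma (s + ν) * Gamma (s - ν) := by
        rw [Gamma_mul_Gamma_add_half, div_eq_iff hΓ₂.ne']
        linear_combination (√π * Gamma (s + ν) * Gamma (s - ν) * Gamma (2 * s)) * hpow

theorem integral_rpow_mul_exp_neg_mul_besselK {ν s : ℝ} (h₁ : 0 < s + ν) (h₂ : 0 < s - ν) :
    ∫ u in Ioi 0, u ^ (s - 1) * exp (-u) * besselK ν u
      = √π * Gamma (s + ν) * Gamma (s - ν) / (Gamma (s + 1 / 2) * 2 ^ s) := by
  rw [integral_rpow_mul_exp_neg_mul_besselK_eq_Gamma_mul (by linarith)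
      (integrable_cosh_mul_mul_one_add_cosh_rpow_neg h₁ h₂).integrableOn,
    integral_cosh_mul_mul_one_add_cosh_rpow_neg_Ioi h₁ h₂, Gamma_mul_two_rpow_mul_beta h₁ h₂]

lemma integral_comp_sq_mul_abs_rpow (g : ℝ → ℝ) (a : ℝ) :
    ∫ t, g (t ^ 2) * |t| ^ (2 * a - 1) = ∫ u in Ioi 0, g u * u ^ (a - 1) := by
  have h := integral_comp_abs (f := fun x => g (x ^ 2) * x ^ (2 * a - 1))
  simp only [sq_abs] at h
  rw [h, ← integral_comp_rpow_Ioi_of_pos (g := fun u => g u * u ^ (a - 1)) two_pos,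
    ← integral_const_mul]
  refine setIntegral_congr_fun measurableSet_Ioi fun x (hx : 0 < x) => ?_
  have hpow : x ^ ((2 : ℝ) - 1) * x ^ (2 * (a - 1)) = x ^ (2 * a - 1) := by
    rw [← rpow_add hx]
    ring_nf
  rw [smul_eq_mul, ← rpow_mul hx.le, rpow_two, ← hpow]
  ring

lemma integral_pow_mul_exp_neg_sq_mul_besselK_sq (ν m C : ℝ) (n : ℕ) :
    ∫ t : ℝ, t ^ (2 * n) * (C * exp (-t ^ 2) * besselK ν (t ^ 2) * |t| ^ (2 * m - 1))
      = C * ∫ u in Ioi 0, u ^ (m + n - 1) * exp (-u) * besselK ν u := by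
  calc ∫ t : ℝ, t ^ (2 * n) * (C * exp (-t ^ 2) * besselK ν (t ^ 2) * |t| ^ (2 * m - 1))
      = ∫ t : ℝ, C * ((t ^ 2) ^ n * exp (-t ^ 2) * besselK ν (t ^ 2) * |t| ^ (2 * m - 1)) := by
        congr 1 with t
        rw [pow_mul]
        ring
    _ = C * ∫ u in Ioi 0, u ^ n * exp (-u) * besselK ν u * u ^ (m - 1) := by
        rw [integral_const_mul,
          integral_comp_sq_mul_abs_rpow fun u => u ^ n * exp (-u) * besselK ν u]
    _ = C * ∫ u in Ioi 0, u ^ (m + n - 1) * exp (-u) * besselK ν u := by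
        congr 1
        refine setIntegral_congr_fun measurableSet_Ioi fun u (hu : 0 < u) => ?_
        rw [show m + n - 1 = n + (m - 1) by ring, rpow_add hu, rpow_natCast]
        ring

lemma Gamma_add_nat_eq_mul_ascPochhammer_eval {x : ℝ} (hx : 0 < x) (n : ℕ) :
    Gamma (x + n) = Gamma x * (ascPochhammer ℝ n).eval x := by
  induction n with
  | zero => simp
  | succ n ih =>
    rw [Nat.cast_succ, ← add_assoc, Gamma_add_one (by positivity), ih, ascPochhammer_succ_eval]
    ring

lemma ascPochhammer_ratio_succ {a b c : ℝ} (ha : 0 < a) (hb : 0 < b) (hc : 0 < c) (k : ℕ) :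
    (ascPochhammer ℝ (k + 1)).eval a * (ascPochhammer ℝ (k + 1)).eval b
        / (2 ^ (k + 1) * (ascPochhammer ℝ (k + 1)).eval c)
      / ((ascPochhammer ℝ k).eval a * (ascPochhammer ℝ k).eval b
        / (2 ^ k * (ascPochhammer ℝ k).eval c))
      = (a + k) * (b + k) / (2 * (c + k)) := by
  have := ascPochhammer_pos k a ha
  have := ascPochhammer_pos k b hb
  have := ascPochhammer_pos k c hc
  simp only [ascPochhammer_succ_eval]
  field_simp
  ring

lemma Gamma_normalization_mul_eq_ascPochhammer {m ν : ℝ} (h₁ : 0 < m + ν) (h₂ : 0 < m - ν)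
    (n : ℕ) :
    Gamma (m + 1 / 2) * 2 ^ m / (√π * Gamma (m + ν) * Gamma (m - ν))
        * (√π * Gamma (m + n + ν) * Gamma (m + n - ν) / (Gamma (m + n + 1 / 2) * 2 ^ (m + n)))
      = (ascPochhammer ℝ n).eval (m + ν) * (ascPochhammer ℝ n).eval (m - ν)
        / (2 ^ n * (ascPochhammer ℝ n).eval (m + 1 / 2)) := by
  have hm : 0 < m + 1 / 2 := by linarith
  rw [show m + n + ν = m + ν + n by ring, show m + n - ν = m - ν + n by ring,
    show m + n + 1 / 2 = m + 1 / 2 + n by ring, Gamma_add_nat_eq_mul_ascPochhammer_eval h₁,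
    Gamma_add_nat_eq_mul_ascPochhammer_eval h₂, Gamma_add_nat_eq_mul_ascPochhammer_eval hm,
    rpow_add two_pos, rpow_natCast]
  have := Gamma_pos_of_pos h₁
  have := Gamma_pos_of_pos h₂
  have := Gamma_pos_of_pos hm
  have := ascPochhammer_pos n _ hm
  rw [div_mul_div_comm, div_eq_div_iff (by positivity) (by positivity)]
  ring

/-- For the weight C e^{-t²}K_ν(t²)|t|^{2μ-1} on ℝ with
C = Γ(μ+1/2)2^μ/(√π Γ(μ+ν)Γ(μ-ν)), the even moments are
μ_{2n} = (μ+ν)_n(μ-ν)_n/(2^n(μ+1/2)_n), hence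
x_n = (μ+ν+n-1)(μ-ν+n-1)/(2(μ+n-1/2)). -/
theorem bessel_weight_moments
    (m ν : ℝ) (h1 : 0 < m + ν) (h2 : 0 < m - ν)
    (M : ℕ → ℝ)
    (hM : ∀ n : ℕ, M n = ∫ t : ℝ,
      t ^ (2 * n) * (Real.Gamma (m + 1/2) * (2:ℝ) ^ m
        / (Real.sqrt π * Real.Gamma (m + ν) * Real.Gamma (m - ν))
        * Real.exp (-t ^ 2) * besselK ν (t ^ 2) * |t| ^ (2 * m - 1))) :
    (∀ n : ℕ, M n = (ascPochhammer ℝ n).eval (m + ν) * (ascPochhammer ℝ n).eval (m - ν)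
        / (2 ^ n * (ascPochhammer ℝ n).eval (m + 1/2))) ∧
    (∀ n : ℕ, 1 ≤ n → M n / M (n - 1)
        = (m + ν + n - 1) * (m - ν + n - 1) / (2 * (m + n - 1/2))) := by
  have hmoment (n : ℕ) : M n
      = (ascPochhammer ℝ n).eval (m + ν) * (ascPochhammer ℝ n).eval (m - ν)
        / (2 ^ n * (ascPochhammer ℝ n).eval (m + 1/2)) := by
    rw [hM, integral_pow_mul_exp_neg_sq_mul_besselK_sq,
      integral_rpow_mul_exp_neg_mul_besselK (by linarith) (by linarith)]
    exact Gamma_normalization_mul_eq_ascPochhammer h1 h2 n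
  refine ⟨hmoment, fun n hn => ?_⟩
  obtain ⟨k, rfl⟩ := Nat.exists_eq_add_of_le' hn
  rw [hmoment, hmoment, Nat.add_sub_cancel, ascPochhammer_ratio_succ h1 h2 (by linarith)]
  push_cast
  ring
end

section
/- Let μ be an even probability measure on ℝ with infinite support and finite moments, x_n = μ_{2n}/μ_{2n-2}. Then the nonlinear inequality 2 x_{n+1} x_{n+2} x_{n+3} + x_{n+2} x_{n+3} x_{n+4} > x_{n+1} x_{n+2}² + x_{n+2} x_{n+3}² + x_{n+1} x_{n+3} x_{n+4} holds for all n ≥ 0. -/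
/-!
For `v ≠ 0` the function `t ^ (2 * n) * (∑ i, v i * t ^ (2 * i)) ^ 2` is a nonzero polynomial, so
it is nonnegative and vanishes only at finitely many points; as `μ` has infinite support its
integral, which is the quadratic form of the Hankel matrix `(μ_{2(n+i+j)})ᵢⱼ` at `v`, is positive.
Hence the `3 × 3` Hankel determinant of `μ_{2n}, …, μ_{2n+8}` is positive, and divided by
`μ_{2n} μ_{2n+2} μ_{2n+4}` it is exactly the difference of the two sides of the inequality.
-/

open MeasureTheory Polynomial
open scoped Matrix

def hankelMatrix {α : Type*} (m : ℕ → α) (k : ℕ) : Matrix (Fin k) (Fin k) α :=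
  Matrix.of fun i j => m (i + j)

lemma hankelMatrix_isHermitian (m : ℕ → ℝ) (k : ℕ) : (hankelMatrix m k).IsHermitian := by
  ext i j
  simp [hankelMatrix, add_comm]

lemma integral_pos_of_finite_zeros {μ : Measure ℝ} (hinf : ∀ s : Finset ℝ, μ (s : Set ℝ)ᶜ ≠ 0)
    {f : ℝ → ℝ} (hf : 0 ≤ f) (hfi : Integrable f μ) (hzeros : {t | f t = 0}.Finite) :
    0 < ∫ t, f t ∂μ := by
  rw [integral_pos_iff_support_of_nonneg hf hfi, Function.support, ← Set.compl_ofPred,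
    ← hzeros.coe_toFinset]
  exact pos_iff_ne_zero.mpr (hinf _)

lemma sum_C_mul_X_pow_two_mul_ne_zero {k : ℕ} {v : Fin k → ℝ} (hv : v ≠ 0) :
    ∑ i, C (v i) * X ^ (2 * (i : ℕ)) ≠ 0 := by
  obtain ⟨i, hi⟩ := Function.ne_iff.mp hv
  intro h
  apply hi
  simpa [finsetSum_coeff, coeff_C_mul_X_pow, Fin.val_inj] using congrArg (coeff · (2 * (i : ℕ))) h

lemma mul_sq_sum_eq_sum_sum {k : ℕ} (n : ℕ) (v : Fin k → ℝ) (t : ℝ) :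
    t ^ (2 * n) * (∑ i, v i * t ^ (2 * (i : ℕ))) ^ 2
      = ∑ i, ∑ j, v i * v j * t ^ (2 * (n + i + j)) := by
  simp_rw [sq, Finset.sum_mul_sum, Finset.mul_sum]
  exact Finset.sum_congr rfl fun i _ => Finset.sum_congr rfl fun j _ => by ring

section
variable {μ : Measure ℝ} (hint : ∀ n : ℕ, Integrable (fun t : ℝ => t ^ (2 * n)) μ)
include hint

lemma integrable_mul_sq_sum (n k : ℕ) (v : Fin k → ℝ) :
    Integrable (fun t => t ^ (2 * n) * (∑ i, v i * t ^ (2 * (i : ℕ))) ^ 2) μ := by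
  simp_rw [mul_sq_sum_eq_sum_sum]
  exact integrable_finsetSum _ fun i _ => integrable_finsetSum _ fun j _ => (hint _).const_mul _

lemma integral_mul_sq_sum_eq_dotProduct (n k : ℕ) (v : Fin k → ℝ) :
    ∫ t, t ^ (2 * n) * (∑ i, v i * t ^ (2 * (i : ℕ))) ^ 2 ∂μ
      = v ⬝ᵥ hankelMatrix (fun j => ∫ t, t ^ (2 * (n + j)) ∂μ) k *ᵥ v := by
  simp_rw [mul_sq_sum_eq_sum_sum]
  rw [integral_finsetSum _ fun i _ => integrable_finsetSum _ fun j _ => (hint _).const_mul _]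
  simp_rw [integral_finsetSum _ fun j _ => (hint _).const_mul _, integral_const_mul]
  simp only [dotProduct, Matrix.mulVec, hankelMatrix, Matrix.of_apply, Finset.mul_sum]
  exact Finset.sum_congr rfl fun i _ => Finset.sum_congr rfl fun j _ => by ring_nf

lemma hankelMatrix_evenMoments_posDef (hinf : ∀ s : Finset ℝ, μ (s : Set ℝ)ᶜ ≠ 0) (n k : ℕ) :
    (hankelMatrix (fun j => ∫ t, t ^ (2 * (n + j)) ∂μ) k).PosDef := by
  refine .of_dotProduct_mulVec_pos (hankelMatrix_isHermitian _ _) fun v hv => ?_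
  rw [star_trivial, ← integral_mul_sq_sum_eq_dotProduct hint]
  set P : ℝ[X] := ∑ i, C (v i) * X ^ (2 * (i : ℕ))
  have hQ : X ^ (2 * n) * P ^ 2 ≠ 0 :=
    mul_ne_zero (pow_ne_zero _ X_ne_zero) (pow_ne_zero _ (sum_C_mul_X_pow_two_mul_ne_zero hv))
  refine integral_pos_of_finite_zeros hinf (fun t => ?_) (integrable_mul_sq_sum hint n k v) ?_
  · exact mul_nonneg ((even_two_mul n).pow_nonneg t) (sq_nonneg _)
  · convert finite_setOfPred_isRoot hQ using 3
    simp [P, eval_finsetSum]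

end

lemma ratio_inequality_of_det_pos {a b c d e : ℝ}
    (ha : 0 < a) (hb : 0 < b) (hc : 0 < c) (hd : 0 < d)
    (hdet : 0 < !![a, b, c; b, c, d; c, d, e].det) :
    b / a * (c / b) ^ 2 + c / b * (d / c) ^ 2 + b / a * (d / c) * (e / d)
      < 2 * (b / a) * (c / b) * (d / c) + c / b * (d / c) * (e / d) := by
  rw [Matrix.det_fin_three] at hdet
  simp only [Matrix.of_apply, Matrix.cons_val', Matrix.cons_val_zero, Matrix.cons_val_one,
    Matrix.cons_val_two, Matrix.empty_val', Matrix.cons_val_fin_one, Matrix.head_cons,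
    Matrix.tail_cons, Matrix.head_fin_const] at hdet
  have key : 2 * (b / a) * (c / b) * (d / c) + c / b * (d / c) * (e / d)
      - (b / a * (c / b) ^ 2 + c / b * (d / c) ^ 2 + b / a * (d / c) * (e / d))
      = (a * c * e - a * d * d - b * b * e + b * d * c + c * b * d - c * c * c) / (a * b * c) := by
    field_simp
    ring
  linarith [div_pos hdet (by positivity : 0 < a * b * c)]

theorem moment_ratio_hankel_inequality_general
    (μ : Measure ℝ)
    (hinf : ∀ s : Finset ℝ, μ ((s : Set ℝ))ᶜ ≠ 0)
    (hint : ∀ n : ℕ, Integrable (fun t : ℝ => t ^ (2 * n)) μ)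
    (M : ℕ → ℝ) (hM : ∀ n : ℕ, M n = ∫ t : ℝ, t ^ (2 * n) ∂μ)
    (x : ℕ → ℝ) (hx : ∀ n : ℕ, 1 ≤ n → x n = M n / M (n - 1)) :
    ∀ n : ℕ, 2 * x (n+1) * x (n+2) * x (n+3) + x (n+2) * x (n+3) * x (n+4)
      > x (n+1) * x (n+2) ^ 2 + x (n+2) * x (n+3) ^ 2 + x (n+1) * x (n+3) * x (n+4) := by
  intro n
  have hpos (k : ℕ) : 0 < M k := by
    simpa [hankelMatrix, hM] using (hankelMatrix_evenMoments_posDef hint hinf k 1).diag_pos (i := 0)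
  have hdet := (hankelMatrix_evenMoments_posDef hint hinf n 3).det_pos
  rw [Matrix.eta_fin_three (hankelMatrix _ 3)] at hdet
  simp only [hankelMatrix, Matrix.of_apply, ← hM] at hdet
  rw [hx (n + 1) (by omega), hx (n + 2) (by omega), hx (n + 3) (by omega), hx (n + 4) (by omega)]
  simpa using ratio_inequality_of_det_pos (hpos n) (hpos (n + 1)) (hpos (n + 2)) (hpos (n + 3)) hdet

/-- The nonlinear inequality
2x_{n+1}x_{n+2}x_{n+3} + x_{n+2}x_{n+3}x_{n+4}
  > x_{n+1}x_{n+2}² + x_{n+2}x_{n+3}² + x_{n+1}x_{n+3}x_{n+4}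
for the moment ratios of an even probability measure with infinite support. -/
theorem moment_ratio_hankel_inequality
    (μ : Measure ℝ) [IsProbabilityMeasure μ]
    (heven : Measure.map (fun t : ℝ => -t) μ = μ)
    (hinf : ∀ s : Finset ℝ, μ ((s : Set ℝ))ᶜ ≠ 0)
    (hint : ∀ n : ℕ, Integrable (fun t : ℝ => t ^ (2 * n)) μ)
    (M : ℕ → ℝ) (hM : ∀ n : ℕ, M n = ∫ t : ℝ, t ^ (2 * n) ∂μ)
    (x : ℕ → ℝ) (hx : ∀ n : ℕ, 1 ≤ n → x n = M n / M (n - 1)) :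
    ∀ n : ℕ, 2 * x (n+1) * x (n+2) * x (n+3) + x (n+2) * x (n+3) * x (n+4)
      > x (n+1) * x (n+2) ^ 2 + x (n+2) * x (n+3) ^ 2 + x (n+1) * x (n+3) * x (n+4) :=
  moment_ratio_hankel_inequality_general μ hinf hint M hM x hx
end
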